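/- Let 0 < α_min ≤ α_max < 2. There exist constants c_1, c_2, c_3 > 0 depending only on α_min and α_max such that for every α ∈ [α_min, α_max]: (i) c_1 |n|^{−α−1} ≤ |a_n^{(α)}| ≤ c_2 |n|^{−α−1} for every integer n ≠ 0; and (ii) Σ_{n ≥ N} |a_n^{(α)}| ≥ c_3 N^{−α} for every integer N ≥ 1. -/

import Mathlib

/-!
Integrating over a period the derivative of the boundary term
`e^{-inη} (1 - e^{iη}) (4 sin²(η/2))^{α/2}` gives the recurrence
`(n + α/2) a_n = (n - 1 - α/2) a_{n-1}`, and `a_{-n} = a_n` since the symbol is even.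
Hence `|a_k| = |a_1| ∏_{j=1}^{k-1} (j - α/2)/(j + 1 + α/2)`, and Bernoulli's inequality
squeezes each factor between `((j - α/2)/(j + 1 - α/2))^{α+1}` and
`((j + α/2)/(j + 1 + α/2))^{α+1}`, so the products telescope to `k^{-α-1}` up to constants.
Crude bounds on the symbol give `1/4 ≤ a_0 ≤ 4`, and the tail bound comes from the `N` terms
with index in `[N, 2N)`.
-/

open MeasureTheory Real

noncomputable section

/-- The finite difference weight `a_n^{(α)} = (1/(2π)) ∫_{-π}^{π} e^{-inη} (4 sin²(η/2))^{α/2} dη`. -/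
def aWeightC (α : ℝ) (n : ℤ) : ℂ :=
  (1 / (2 * Real.pi)) • ∫ η in (-Real.pi)..Real.pi,
    Complex.exp (-Complex.I * (n : ℂ) * (η : ℂ)) *
      (((4 * Real.sin (η / 2) ^ 2) ^ (α / 2) : ℝ) : ℂ)

def fracSymbol (α η : ℝ) : ℝ := (4 * Real.sin (η / 2) ^ 2) ^ (α / 2)

open Complex

lemma continuous_fracSymbol {α : ℝ} (hα : 0 ≤ α) : Continuous (fracSymbol α) :=
  (by fun_prop : Continuous fun η : ℝ => 4 * Real.sin (η / 2) ^ 2).rpow_const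
    fun _ => Or.inr (by positivity)

lemma fracSymbol_neg (α η : ℝ) : fracSymbol α (-η) = fracSymbol α η := by
  simp [fracSymbol, neg_div, Real.sin_neg]

lemma hasDerivAt_fracSymbol (α : ℝ) {η : ℝ} (hη : Real.sin (η / 2) ≠ 0) :
    HasDerivAt (fracSymbol α)
      (α / 2 * (4 * Real.sin (η / 2) ^ 2) ^ (α / 2 - 1) * (2 * Real.sin η)) η := by
  have hbase : HasDerivAt (fun t => 4 * Real.sin (t / 2) ^ 2)
      (4 * (2 * Real.sin (η / 2) * (Real.cos (η / 2) * (1 / 2)))) η := by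
    simpa using (((hasDerivAt_id η).div_const 2).sin.pow 2).const_mul 4
  show HasDerivAt (fun t => (4 * Real.sin (t / 2) ^ 2) ^ (α / 2)) _ η
  convert hbase.rpow_const (p := α / 2) (Or.inl (by positivity)) using 1
  nth_rw 2 [show η = 2 * (η / 2) by ring]
  rw [Real.sin_two_mul]
  ring

lemma one_sub_exp_mul_sin (η : ℝ) :
    (1 - cexp (I * η)) * (2 * Real.sin η) =
      -I * (1 + cexp (I * η)) * (4 * Real.sin (η / 2) ^ 2) := by
  have hexp : cexp (I * η) = Complex.cos (η / 2) ^ 2 - Complex.sin (η / 2) ^ 2 +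
      2 * Complex.sin (η / 2) * Complex.cos (η / 2) * I := by
    conv_lhs => rw [mul_comm, Complex.exp_mul_I, show (η : ℂ) = 2 * (η / 2) by ring,
      Complex.cos_two_mul, Complex.sin_two_mul]
    linear_combination Complex.sin_sq_add_cos_sq (η / 2 : ℂ)
  have hsin : Complex.sin η = 2 * Complex.sin (η / 2) * Complex.cos (η / 2) := by
    rw [← Complex.sin_two_mul]; ring_nf
  push_cast
  rw [hexp, hsin]
  linear_combination (-4 * Complex.sin (η / 2) * (Complex.cos (η / 2) + Complex.sin (η / 2) * I)) *
    Complex.sin_sq_add_cos_sq (η / 2 : ℂ) + 8 * Complex.sin (η / 2) ^ 3 * Complex.cos (η / 2) * I_sq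

def weightIntegrand (α : ℝ) (n : ℤ) (η : ℝ) : ℂ := cexp (-I * n * η) * fracSymbol α η

lemma aWeightC_eq_integral (α : ℝ) (n : ℤ) :
    aWeightC α n = (1 / (2 * π)) • ∫ η in -π..π, weightIntegrand α n η := rfl

lemma continuous_weightIntegrand {α : ℝ} (hα : 0 ≤ α) (n : ℤ) :
    Continuous (weightIntegrand α n) := by
  have := continuous_fracSymbol hα
  unfold weightIntegrand
  fun_prop

def boundaryTerm (α : ℝ) (n : ℤ) (η : ℝ) : ℂ :=
  cexp (-I * n * η) * (1 - cexp (I * η)) * fracSymbol α η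

lemma continuous_boundaryTerm {α : ℝ} (hα : 0 ≤ α) (n : ℤ) : Continuous (boundaryTerm α n) := by
  have := continuous_fracSymbol hα
  unfold boundaryTerm
  fun_prop

lemma boundaryTerm_neg_pi (α : ℝ) (n : ℤ) : boundaryTerm α n (-π) = boundaryTerm α n π := by
  have hexp : cexp (-I * n * (-π : ℝ)) = cexp (-I * n * π) :=
    Complex.exp_eq_exp_iff_exists_int.mpr ⟨n, by push_cast; ring⟩
  have hπ : cexp (I * π) = -1 := by rw [mul_comm]; exact Complex.exp_pi_mul_I
  have hnegπ : cexp (I * (-π : ℝ)) = -1 := by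
    rw [Complex.ofReal_neg, mul_neg, Complex.exp_neg, hπ, inv_neg, inv_one]
  simp only [boundaryTerm, hexp, hπ, hnegπ, fracSymbol_neg]

lemma hasDerivAt_boundaryTerm (α : ℝ) (n : ℤ) {η : ℝ} (hη : Real.sin (η / 2) ≠ 0) :
    HasDerivAt (boundaryTerm α n)
      (-I * (n + α / 2) * weightIntegrand α n η -
        I * (α / 2 + 1 - n) * weightIntegrand α (n - 1) η) η := by
  have hid : HasDerivAt (fun t : ℝ => (t : ℂ)) 1 η := ofRealCLM.hasDerivAt
  have he := ((hid.const_mul (-I * n)).cexp)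
  have hz := (hid.const_mul I).cexp
  have hg := (hasDerivAt_fracSymbol α hη).ofReal_comp
  refine ((he.fun_mul (hz.const_sub 1)).fun_mul hg).congr_deriv ?_
  have hx : 4 * Real.sin (η / 2) ^ 2 ≠ 0 := by positivity
  have hshift : cexp (-I * ((n - 1 : ℤ) : ℂ) * η) = cexp (-I * n * η) * cexp (I * η) := by
    rw [← Complex.exp_add]; push_cast; ring_nf
  have hsymb : fracSymbol α η =
      (4 * Real.sin (η / 2) ^ 2) ^ (α / 2 - 1) * (4 * Real.sin (η / 2) ^ 2) := by
    rw [fracSymbol, Real.rpow_sub_one hx, div_mul_cancel₀ _ hx]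
  have key := one_sub_exp_mul_sin η
  simp only [weightIntegrand, hshift, hsymb]
  push_cast at key ⊢
  linear_combination (cexp (-I * n * η) * (α / 2) *
    (((4 * Real.sin (η / 2) ^ 2) ^ (α / 2 - 1) : ℝ) : ℂ)) * key

lemma integral_weightIntegrand_recurrence {α : ℝ} (hα : 0 ≤ α) (n : ℤ) :
    (n + α / 2 : ℂ) * ∫ η in -π..π, weightIntegrand α n η =
      (n - 1 - α / 2) * ∫ η in -π..π, weightIntegrand α (n - 1) η := by
  have hsin : ∀ η ∈ Set.Ioo (-π) π \ {0}, Real.sin (η / 2) ≠ 0 := by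
    rintro η ⟨⟨h₁, h₂⟩, h₀⟩
    rw [Ne, Real.sin_eq_zero_iff_of_lt_of_lt (by linarith) (by linarith)]
    exact fun h => h₀ (by rw [Set.mem_singleton_iff]; linarith)
  have hint (m : ℤ) : IntervalIntegrable (weightIntegrand α m) volume (-π) π :=
    (continuous_weightIntegrand hα m).intervalIntegrable _ _
  -- The symbol behaves like `|η|^α` at `0`, so the boundary term need not be differentiable there.
  have hFTC := integral_eq_of_hasDerivAt_off_countable_of_le (boundaryTerm α n) _
    (by linarith [pi_pos]) (Set.countable_singleton 0) (continuous_boundaryTerm hα n).continuousOn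
    (fun η hη => hasDerivAt_boundaryTerm α n (hsin η hη))
    (((hint n).const_mul _).sub ((hint (n - 1)).const_mul _))
  rw [intervalIntegral.integral_sub ((hint n).const_mul _) ((hint (n - 1)).const_mul _),
    intervalIntegral.integral_const_mul, intervalIntegral.integral_const_mul, boundaryTerm_neg_pi,
    sub_self] at hFTC
  set J := ∫ η in -π..π, weightIntegrand α n η
  set J' := ∫ η in -π..π, weightIntegrand α (n - 1) η
  linear_combination I * hFTC + ((n + α / 2) * J + (α / 2 + 1 - n) * J') * I_sq

lemma aWeightC_recurrence {α : ℝ} (hα : 0 ≤ α) (n : ℤ) :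
    (n + α / 2 : ℂ) * aWeightC α n = (n - 1 - α / 2) * aWeightC α (n - 1) := by
  simp only [aWeightC_eq_integral, Complex.real_smul]
  linear_combination ((1 / (2 * π) : ℝ) : ℂ) * integral_weightIntegrand_recurrence hα n

lemma norm_aWeightC_succ {α : ℝ} (hα : 0 ≤ α) (k : ℕ) :
    (k + 1 + α / 2) * ‖aWeightC α (k + 1)‖ = |k - α / 2| * ‖aWeightC α k‖ := by
  have h := congrArg norm (aWeightC_recurrence hα (k + 1))
  rw [add_sub_cancel_right, norm_mul, norm_mul] at h
  have hl : ((((k + 1 : ℤ)) : ℂ) + α / 2) = ((k + 1 + α / 2 : ℝ) : ℂ) := by push_cast; ring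
  have hr : ((((k + 1 : ℤ)) : ℂ) - 1 - α / 2) = ((k - α / 2 : ℝ) : ℂ) := by push_cast; ring
  rwa [hl, hr, Complex.norm_real, Complex.norm_real, Real.norm_of_nonneg (by positivity),
    Real.norm_eq_abs] at h

lemma aWeightC_neg (α : ℝ) (n : ℤ) : aWeightC α (-n) = aWeightC α n := by
  have h : ∀ η, weightIntegrand α (-n) η = weightIntegrand α n (-η) := by
    intro η
    simp only [weightIntegrand, fracSymbol_neg]
    push_cast
    ring_nf
  simp only [aWeightC_eq_integral, h, intervalIntegral.integral_comp_neg, neg_neg]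

lemma fracSymbol_le_four {α : ℝ} (hα₀ : 0 ≤ α) (hα₂ : α ≤ 2) (η : ℝ) : fracSymbol α η ≤ 4 :=
  calc fracSymbol α η ≤ 4 ^ (α / 2) :=
        Real.rpow_le_rpow (by positivity) (by nlinarith [Real.sin_sq_le_one (η / 2)])
          (by positivity)
    _ ≤ 4 ^ (1 : ℝ) := Real.rpow_le_rpow_of_exponent_le (by norm_num) (by linarith)
    _ = 4 := Real.rpow_one 4

lemma one_le_fracSymbol {α η : ℝ} (hα : 0 ≤ α) (h₁ : π / 2 ≤ η) (h₂ : η ≤ π) :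
    1 ≤ fracSymbol α η := by
  have hcos : Real.cos η ≤ 0 := Real.cos_nonpos_of_pi_div_two_le_of_le h₁ (by linarith)
  have hbase : 1 ≤ 4 * Real.sin (η / 2) ^ 2 := by
    rw [Real.sin_sq_eq_half_sub, show 2 * (η / 2) = η by ring]
    linarith
  exact Real.one_le_rpow hbase (by positivity)

lemma norm_aWeightC_zero_mem_Icc {α : ℝ} (hα₀ : 0 ≤ α) (hα₂ : α ≤ 2) :
    ‖aWeightC α 0‖ ∈ Set.Icc (1 / 4) 4 := by
  have hπ := pi_pos
  have hint : IntervalIntegrable (fracSymbol α) volume (-π) π :=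
    (continuous_fracSymbol hα₀).intervalIntegrable _ _
  have hlower : π / 2 ≤ ∫ η in -π..π, fracSymbol α η :=
    calc π / 2 = ∫ _ in π / 2..π, (1 : ℝ) := by
          rw [intervalIntegral.integral_const, smul_eq_mul]; ring
      _ ≤ ∫ η in π / 2..π, fracSymbol α η :=
        intervalIntegral.integral_mono_on (by linarith) intervalIntegrable_const
          ((continuous_fracSymbol hα₀).intervalIntegrable _ _)
          fun η hη => one_le_fracSymbol hα₀ hη.1 hη.2
      _ ≤ ∫ η in -π..π, fracSymbol α η :=
        intervalIntegral.integral_mono_interval (by linarith) (by linarith) le_rfl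
          (Filter.Eventually.of_forall fun η => Real.rpow_nonneg (by positivity) _) hint
  have hupper : ∫ η in -π..π, fracSymbol α η ≤ 8 * π :=
    calc ∫ η in -π..π, fracSymbol α η ≤ ∫ _ in -π..π, (4 : ℝ) :=
          intervalIntegral.integral_mono_on (by linarith) hint intervalIntegrable_const
            fun η _ => fracSymbol_le_four hα₀ hα₂ η
      _ = 8 * π := by rw [intervalIntegral.integral_const, smul_eq_mul]; ring
  have hzero : aWeightC α 0 = ((1 / (2 * π) * ∫ η in -π..π, fracSymbol α η : ℝ) : ℂ) := by
    simp [aWeightC_eq_integral, weightIntegrand, intervalIntegral.integral_ofReal]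
  rw [hzero, Complex.norm_real, one_div_mul_eq_div,
    Real.norm_of_nonneg (div_nonneg (by linarith) (by positivity))]
  exact ⟨by rw [le_div_iff₀ (by positivity)]; linarith,
    by rw [div_le_iff₀ (by positivity)]; linarith⟩

lemma rpow_sub_one_mul_add_le_rpow_add {x h p : ℝ} (hx : 0 < x) (hxh : 0 ≤ x + h)
    (hp : 1 ≤ p) : x ^ (p - 1) * (x + p * h) ≤ (x + h) ^ p := by
  have hshift : 1 + h / x = (x + h) / x := by field_simp
  have hbern := one_add_mul_self_le_rpow_one_add (s := h / x)
    (by rw [le_div_iff₀ hx]; linarith) hp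
  calc x ^ (p - 1) * (x + p * h) = x ^ p * (1 + p * (h / x)) := by
        rw [Real.rpow_sub_one hx.ne']; field_simp
    _ ≤ x ^ p * (1 + h / x) ^ p := by gcongr
    _ = (x + h) ^ p := by
        rw [← Real.mul_rpow hx.le (hshift ▸ div_nonneg hxh hx.le), hshift,
          mul_div_cancel₀ _ hx.ne']

lemma norm_aWeightC_succ_of_one_le {α : ℝ} (hα₀ : 0 ≤ α) (hα₂ : α ≤ 2) {k : ℕ} (hk : 1 ≤ k) :
    (k + 1 + α / 2) * ‖aWeightC α (k + 1)‖ = (k - α / 2) * ‖aWeightC α k‖ := by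
  have hk' : (1 : ℝ) ≤ k := by exact_mod_cast hk
  rw [norm_aWeightC_succ hα₀, abs_of_nonneg (by linarith)]

lemma norm_aWeightC_mul_rpow_antitoneOn {α : ℝ} (hα₀ : 0 ≤ α) (hα₂ : α ≤ 2) :
    AntitoneOn (fun k : ℕ => ‖aWeightC α k‖ * (k + α / 2) ^ (α + 1)) (Set.Ici 1) := by
  refine antitoneOn_nat_Ici_of_succ_le fun k hk => ?_
  have hk' : (1 : ℝ) ≤ k := by exact_mod_cast hk
  set X : ℝ := k + 1 + α / 2 with hXdef
  have hX : 0 < X := by positivity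
  have hbern := rpow_sub_one_mul_add_le_rpow_add (x := X) (h := -1) (p := α + 1)
    hX (by linarith [hXdef]) (by linarith)
  rw [show X + (α + 1) * -1 = k - α / 2 by ring, show X + -1 = k + α / 2 by ring] at hbern
  push_cast
  calc ‖aWeightC α (k + 1)‖ * X ^ (α + 1)
      = X ^ (α + 1) / X * (X * ‖aWeightC α (k + 1)‖) := by field_simp
    _ = ‖aWeightC α k‖ * (X ^ (α + 1 - 1) * (k - α / 2)) := by
        rw [norm_aWeightC_succ_of_one_le hα₀ hα₂ hk, Real.rpow_sub_one hX.ne']; ring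
    _ ≤ ‖aWeightC α k‖ * (k + α / 2) ^ (α + 1) := by gcongr

lemma norm_aWeightC_mul_rpow_monotoneOn {α : ℝ} (hα₀ : 0 ≤ α) (hα₂ : α < 2) :
    MonotoneOn (fun k : ℕ => ‖aWeightC α k‖ * (k - α / 2) ^ (α + 1)) (Set.Ici 1) := by
  refine monotoneOn_nat_Ici_of_le_succ fun k hk => ?_
  have hk' : (1 : ℝ) ≤ k := by exact_mod_cast hk
  set x : ℝ := k - α / 2 with hxdef
  have hx : 0 < x := by linarith
  have hbern := rpow_sub_one_mul_add_le_rpow_add (x := x) (h := 1) (p := α + 1)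
    hx (by linarith) (by linarith)
  rw [show x + (α + 1) * 1 = k + 1 + α / 2 by ring, show x + 1 = k + 1 - α / 2 by ring] at hbern
  push_cast
  calc ‖aWeightC α k‖ * x ^ (α + 1) = x ^ (α + 1 - 1) * (x * ‖aWeightC α k‖) := by
        rw [Real.rpow_sub_one hx.ne']; field_simp
    _ = ‖aWeightC α (k + 1)‖ * (x ^ (α + 1 - 1) * (k + 1 + α / 2)) := by
        rw [← norm_aWeightC_succ_of_one_le hα₀ hα₂.le hk]; ring
    _ ≤ ‖aWeightC α (k + 1)‖ * (k + 1 - α / 2) ^ (α + 1) := by gcongr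

lemma norm_aWeightC_one {α : ℝ} (hα₀ : 0 ≤ α) :
    (1 + α / 2) * ‖aWeightC α 1‖ = α / 2 * ‖aWeightC α 0‖ := by
  simpa [abs_of_nonneg (by linarith : 0 ≤ α / 2), add_comm] using norm_aWeightC_succ hα₀ 0

lemma norm_aWeightC_le {α : ℝ} (hα₀ : 0 ≤ α) (hα₂ : α ≤ 2) {k : ℕ} (hk : 1 ≤ k) :
    ‖aWeightC α k‖ ≤ 32 * (k : ℝ) ^ (-α - 1) := by
  have hk' : (1 : ℝ) ≤ k := by exact_mod_cast hk
  have hdecay := norm_aWeightC_mul_rpow_antitoneOn hα₀ hα₂ (Set.mem_Ici.mpr le_rfl)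
    (Set.mem_Ici.mpr hk) hk
  have h₁ : ‖aWeightC α 1‖ ≤ 4 := by
    have := norm_aWeightC_one hα₀
    nlinarith [(norm_aWeightC_zero_mem_Icc hα₀ hα₂).2, norm_nonneg (aWeightC α 1)]
  have h₂ : ((1 : ℕ) + α / 2 : ℝ) ^ (α + 1) ≤ 8 :=
    calc ((1 : ℕ) + α / 2 : ℝ) ^ (α + 1) ≤ 2 ^ (3 : ℝ) := by
          push_cast
          exact (Real.rpow_le_rpow (by positivity) (by linarith) (by linarith)).trans
            (Real.rpow_le_rpow_of_exponent_le (by norm_num) (by linarith))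
      _ = 8 := by norm_num
  have h₃ : (k : ℝ) ^ (α + 1) ≤ (k + α / 2) ^ (α + 1) :=
    Real.rpow_le_rpow (by positivity) (by linarith) (by linarith)
  have hkpos : 0 < (k : ℝ) ^ (α + 1) := by positivity
  rw [show -α - 1 = -(α + 1) by ring, Real.rpow_neg (by positivity), ← div_eq_mul_inv,
    le_div_iff₀ hkpos]
  calc ‖aWeightC α k‖ * k ^ (α + 1) ≤ ‖aWeightC α k‖ * (k + α / 2) ^ (α + 1) := by gcongr
    _ ≤ ‖aWeightC α 1‖ * ((1 : ℕ) + α / 2 : ℝ) ^ (α + 1) := hdecay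
    _ ≤ 4 * 8 := by gcongr
    _ = 32 := by norm_num

lemma le_norm_aWeightC {α : ℝ} (hα₀ : 0 ≤ α) (hα₂ : α < 2) {k : ℕ} (hk : 1 ≤ k) :
    α / 16 * (1 - α / 2) ^ 3 * (k : ℝ) ^ (-α - 1) ≤ ‖aWeightC α k‖ := by
  have hk' : (1 : ℝ) ≤ k := by exact_mod_cast hk
  have hgrowth := norm_aWeightC_mul_rpow_monotoneOn hα₀ hα₂ (Set.mem_Ici.mpr le_rfl)
    (Set.mem_Ici.mpr hk) hk
  have h₁ : α / 16 ≤ ‖aWeightC α 1‖ := by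
    have := norm_aWeightC_one hα₀
    nlinarith [(norm_aWeightC_zero_mem_Icc hα₀ hα₂.le).1, norm_nonneg (aWeightC α 1)]
  have h₂ : (1 - α / 2) ^ 3 ≤ ((1 : ℕ) - α / 2 : ℝ) ^ (α + 1) := by
    push_cast
    rw [← Real.rpow_natCast]
    exact Real.rpow_le_rpow_of_exponent_ge (by linarith) (by linarith) (by push_cast; linarith)
  have h₃ : (k - α / 2 : ℝ) ^ (α + 1) ≤ (k : ℝ) ^ (α + 1) :=
    Real.rpow_le_rpow (by linarith) (by linarith) (by linarith)
  have hkpos : 0 < (k : ℝ) ^ (α + 1) := by positivity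
  rw [show -α - 1 = -(α + 1) by ring, Real.rpow_neg (by positivity), ← div_eq_mul_inv,
    div_le_iff₀ hkpos]
  calc α / 16 * (1 - α / 2) ^ 3 ≤ ‖aWeightC α 1‖ * ((1 : ℕ) - α / 2 : ℝ) ^ (α + 1) :=
        mul_le_mul h₁ h₂ (pow_nonneg (by linarith) 3) (norm_nonneg _)
    _ ≤ ‖aWeightC α k‖ * (k - α / 2) ^ (α + 1) := hgrowth
    _ ≤ ‖aWeightC α k‖ * k ^ (α + 1) := by gcongr

lemma le_tsum_of_rpow_le {u : ℕ → ℝ} {c α : ℝ} (hc : 0 ≤ c) (hα₀ : -1 ≤ α) (hα₂ : α ≤ 2)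
    (hu : Summable u) (hu₀ : ∀ k, 0 ≤ u k) {N : ℕ} (hN : 1 ≤ N)
    (hlow : ∀ k, c * ((N + k : ℕ) : ℝ) ^ (-α - 1) ≤ u k) :
    c / 8 * (N : ℝ) ^ (-α) ≤ ∑' k, u k := by
  have hN' : (0 : ℝ) < N := by exact_mod_cast hN
  have hterm : ∀ k ∈ Finset.range N, c * (2 * N : ℝ) ^ (-α - 1) ≤ u k := by
    intro k hk
    have hkN : (k : ℝ) < N := by exact_mod_cast Finset.mem_range.mp hk
    refine le_trans (mul_le_mul_of_nonneg_left ?_ hc) (hlow k)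
    exact Real.rpow_le_rpow_of_nonpos (by push_cast; linarith) (by push_cast; linarith)
      (by linarith)
  have h8 : (1 : ℝ) / 8 ≤ 2 ^ (-α - 1) :=
    calc (1 : ℝ) / 8 = 2 ^ (-3 : ℝ) := by norm_num
      _ ≤ 2 ^ (-α - 1) := Real.rpow_le_rpow_of_exponent_le (by norm_num) (by linarith)
  calc c / 8 * (N : ℝ) ^ (-α) ≤ c * 2 ^ (-α - 1) * (N * N ^ (-α - 1)) := by
        rw [Real.rpow_sub_one hN'.ne', mul_div_cancel₀ _ hN'.ne', div_eq_mul_one_div c]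
        gcongr
    _ = ∑ _k ∈ Finset.range N, c * (2 * N : ℝ) ^ (-α - 1) := by
        rw [Finset.sum_const, Finset.card_range, nsmul_eq_mul,
          Real.mul_rpow (by norm_num) hN'.le]
        ring
    _ ≤ ∑ k ∈ Finset.range N, u k := Finset.sum_le_sum hterm
    _ ≤ ∑' k, u k := hu.sum_le_tsum _ fun k _ => hu₀ k

theorem stmt12_general (αmin αmax : ℝ) (h1 : 0 < αmin) (h3 : αmax < 2) :
    ∃ c1 c2 c3 : ℝ, 0 < c1 ∧ 0 < c2 ∧ 0 < c3 ∧
      ∀ α : ℝ, αmin ≤ α → α ≤ αmax →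
        (∀ n : ℤ, n ≠ 0 →
          c1 * |(n : ℝ)| ^ (-α - 1) ≤ ‖aWeightC α n‖ ∧
          ‖aWeightC α n‖ ≤ c2 * |(n : ℝ)| ^ (-α - 1)) ∧
        (∀ N : ℕ, 1 ≤ N →
          c3 * (N : ℝ) ^ (-α) ≤ ∑' k : ℕ, ‖aWeightC α ((N : ℤ) + k)‖) := by
  have hgap : 0 < 1 - αmax / 2 := by linarith
  set c1 := αmin / 16 * (1 - αmax / 2) ^ 3 with hc1
  refine ⟨c1, 32, c1 / 8, by positivity, by norm_num, by positivity, fun α hmin hmax => ?_⟩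
  have hα₀ : 0 ≤ α := by linarith
  have hα₂ : α < 2 := by linarith
  have hlow {k : ℕ} (hk : 1 ≤ k) : c1 * (k : ℝ) ^ (-α - 1) ≤ ‖aWeightC α k‖ := by
    refine le_trans ?_ (le_norm_aWeightC hα₀ hα₂ hk)
    rw [hc1]
    gcongr
  refine ⟨fun n hn => ?_, fun N hN => ?_⟩
  · obtain ⟨k, rfl | rfl⟩ := Int.eq_nat_or_neg n <;>
    · have hk : 1 ≤ k := by omega
      simp only [aWeightC_neg, Int.cast_neg, Int.cast_natCast, abs_neg, Nat.abs_cast]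
      exact ⟨hlow hk, norm_aWeightC_le hα₀ hα₂.le hk⟩
  · have hcast (k : ℕ) : (N : ℤ) + k = ((N + k : ℕ) : ℤ) := by push_cast; rfl
    simp only [hcast]
    have hsum : Summable fun k : ℕ => 32 * ((N + k : ℕ) : ℝ) ^ (-α - 1) := by
      refine Summable.mul_left _ ?_
      simpa [add_comm] using (summable_nat_add_iff N).mpr (Real.summable_nat_rpow.mpr (by linarith))
    refine le_tsum_of_rpow_le (by positivity) (by linarith) hα₂.le
      (hsum.of_nonneg_of_le (fun _ => norm_nonneg _)
        fun k => norm_aWeightC_le hα₀ hα₂.le (by omega))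
      (fun _ => norm_nonneg _) hN fun k => hlow (by omega)

/-- Two-sided decay estimates `c₁|n|^{-α-1} ≤ |a_n^{(α)}| ≤ c₂|n|^{-α-1}` and the tail
lower bound `Σ_{n ≥ N} |a_n^{(α)}| ≥ c₃ N^{-α}`, uniformly for `α ∈ [α_min, α_max]`. -/
theorem stmt12 (αmin αmax : ℝ) (h1 : 0 < αmin) (h2 : αmin ≤ αmax) (h3 : αmax < 2) :
    ∃ c1 c2 c3 : ℝ, 0 < c1 ∧ 0 < c2 ∧ 0 < c3 ∧
      ∀ α : ℝ, αmin ≤ α → α ≤ αmax →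
        (∀ n : ℤ, n ≠ 0 →
          c1 * |(n : ℝ)| ^ (-α - 1) ≤ ‖aWeightC α n‖ ∧
          ‖aWeightC α n‖ ≤ c2 * |(n : ℝ)| ^ (-α - 1)) ∧
        (∀ N : ℕ, 1 ≤ N →
          c3 * (N : ℝ) ^ (-α) ≤ ∑' k : ℕ, ‖aWeightC α ((N : ℤ) + k)‖) :=
  stmt12_general αmin αmax h1 h3
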